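/- For every vertex v of G, the following identity holds in the extended nonnegative reals: Σ_u deg(u) · q_last(u, v) = deg(v) · q_0(v) · Σ_{n≥0} p_{2n}(v, v), where the sum on the left is over all vertices u of G. -/

import Mathlib

/-!
Split the event "last collision at `v`" according to the time `n` of that collision. By the
Markov property of the pair chain at time `n`, the walks from `u` have their last collision at
time `n` at `v` with probability `p_n(u,v)² · q₀(v)`. Reversibility,
`deg u · p_n(u,v) = deg v · p_n(v,u)`, and Chapman–Kolmogorov turn
`Σ_u deg u · p_n(u,v)²` into `deg v · p_{2n}(v,v)`.

The Markov property is needed for the infinite-horizon event `q₀`; it holds for all measurable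
events because both sides are finite measures on path space with the same cylinder
probabilities.
-/

open MeasureTheory
open scoped ENNReal Classical

namespace CollisionsStmt

variable {V : Type*}

/-- One-step transition probabilities of the simple random walk on `G`:
`p(u,v) = 1/deg u` if `v` is adjacent to `u`, and `0` otherwise. -/
noncomputable def step (G : SimpleGraph V) [G.LocallyFinite] (u v : V) : ℝ≥0∞ :=
  if G.Adj u v then ((G.degree u : ℝ≥0∞))⁻¹ else 0

/-- The `n`-step transition probabilities of the simple random walk on `G`. -/
noncomputable def pn (G : SimpleGraph V) [G.LocallyFinite] : ℕ → V → V → ℝ≥0∞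
  | 0, u, v => if u = v then 1 else 0
  | n + 1, u, v => ∑' w, step G u w * pn G n w v

/-- `μ` is the law (on path space, via the Ionescu–Tulcea trajectory construction) of
two independent walks with one-step transition probabilities `p`, started at `a` and `b`
respectively; equivalently, the Markov chain on `V × V` with kernel `p ⊗ p` started at `(a, b)`.
The law is characterized by being a probability measure with the prescribed
finite-dimensional (cylinder) distributions. -/
def IsPairWalkMeasure [MeasurableSpace V] (p : V → V → ℝ≥0∞) (a b : V)
    (μ : Measure (ℕ → V × V)) : Prop :=
  IsProbabilityMeasure μ ∧
    ∀ (n : ℕ) (x : ℕ → V × V),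
      μ {ω | ∀ i ≤ n, ω i = x i} =
        (if x 0 = (a, b) then (1 : ℝ≥0∞) else 0) *
          ∏ i ∈ Finset.range n, (p (x i).1 (x (i + 1)).1 * p (x i).2 (x (i + 1)).2)

/-- The event that the two walks do not collide at any time `n ≥ 1`. -/
def noCollision : Set (ℕ → V × V) := {ω | ∀ n ≥ 1, (ω n).1 ≠ (ω n).2}

/-- The event that the two walks have their last collision at the vertex `v`: for some
`n ≥ 0`, `X_n = Y_n = v` and `X_m ≠ Y_m` for all `m > n`. -/
def lastCollisionAt (v : V) : Set (ℕ → V × V) :=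
  {ω | ∃ n : ℕ, ω n = (v, v) ∧ ∀ m > n, (ω m).1 ≠ (ω m).2}

/-- The event that the two walks collide at only finitely many times. -/
def finCollisions : Set (ℕ → V × V) := {ω | {n : ℕ | (ω n).1 = (ω n).2}.Finite}

/-- The event that the two walks collide at infinitely many times. -/
def infCollisions : Set (ℕ → V × V) := {ω | {n : ℕ | (ω n).1 = (ω n).2}.Infinite}

/-- The event that the two walks never collide (including at time `0`). -/
def neverCollide : Set (ℕ → V × V) := {ω | ∀ n : ℕ, (ω n).1 ≠ (ω n).2}

section TransitionPowers

variable {S T : Type*}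

noncomputable def transPow (P : S → S → ℝ≥0∞) : ℕ → S → S → ℝ≥0∞
  | 0, x, y => if x = y then 1 else 0
  | n + 1, x, y => ∑' z, P x z * transPow P n z y

variable (P : S → S → ℝ≥0∞)

lemma transPow_zero (x y : S) : transPow P 0 x y = if x = y then 1 else 0 := rfl

lemma transPow_succ (n : ℕ) (x y : S) :
    transPow P (n + 1) x y = ∑' z, P x z * transPow P n z y := rfl

lemma transPow_add (m k : ℕ) (x y : S) :
    transPow P (m + k) x y = ∑' z, transPow P m x z * transPow P k z y := by
  induction m generalizing x with
  | zero => simp [transPow_zero]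
  | succ m ih =>
    calc transPow P (m + 1 + k) x y
        = ∑' w, P x w * ∑' z, transPow P m w z * transPow P k z y := by
          rw [Nat.add_right_comm, transPow_succ]; simp_rw [ih]
      _ = ∑' z, (∑' w, P x w * transPow P m w z) * transPow P k z y := by
          simp_rw [← ENNReal.tsum_mul_left, ← ENNReal.tsum_mul_right, mul_assoc]
          exact ENNReal.tsum_comm
      _ = ∑' z, transPow P (m + 1) x z * transPow P k z y := rfl

lemma transPow_one (x y : S) : transPow P 1 x y = P x y := by
  simp [transPow_succ, transPow_zero]

lemma transPow_succ' (n : ℕ) (x y : S) :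
    transPow P (n + 1) x y = ∑' z, transPow P n x z * P z y := by
  simp_rw [transPow_add, transPow_one]

lemma transPow_prodMk (p : S → S → ℝ≥0∞) (q : T → T → ℝ≥0∞) (n : ℕ) (a b : S × T) :
    transPow (fun s t => p s.1 t.1 * q s.2 t.2) n a b =
      transPow p n a.1 b.1 * transPow q n a.2 b.2 := by
  induction n generalizing a with
  | zero =>
    by_cases h₁ : a.1 = b.1 <;> by_cases h₂ : a.2 = b.2 <;>
      simp [transPow_zero, Prod.ext_iff, h₁, h₂]
  | succ n ih =>
    rw [transPow_succ]
    simp_rw [ih]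
    rw [ENNReal.tsum_prod
        (f := fun s t => p a.1 s * q a.2 t * (transPow p n s b.1 * transPow q n t b.2)),
      transPow_succ, transPow_succ, ← ENNReal.tsum_mul_right]
    refine tsum_congr fun s => ?_
    rw [← ENNReal.tsum_mul_left]
    exact tsum_congr fun t => by ring

lemma mul_transPow_comm {π : S → ℝ≥0∞} (hP : ∀ x y, π x * P x y = π y * P y x)
    (n : ℕ) (x y : S) : π x * transPow P n x y = π y * transPow P n y x := by
  induction n generalizing x with
  | zero => by_cases h : x = y <;> simp [transPow_zero, h, Ne.symm]
  | succ n ih =>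
    calc π x * transPow P (n + 1) x y = ∑' z, P z x * (π z * transPow P n z y) := by
          rw [transPow_succ, ← ENNReal.tsum_mul_left]
          exact tsum_congr fun z => by rw [← mul_assoc, hP, mul_comm (π z), mul_assoc]
      _ = π y * transPow P (n + 1) y x := by
          simp_rw [ih, transPow_succ', ← ENNReal.tsum_mul_left]
          exact tsum_congr fun z => by ring

lemma tsum_mul_transPow_sq {π : S → ℝ≥0∞} (hP : ∀ x y, π x * P x y = π y * P y x)
    (n : ℕ) (y : S) :
    ∑' x, π x * (transPow P n x y * transPow P n x y) = π y * transPow P (n + n) y y := by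
  simp_rw [← mul_assoc, mul_transPow_comm P hP n _ y, transPow_add, ← ENNReal.tsum_mul_left,
    mul_assoc]

end TransitionPowers

section RandomWalk

variable (G : SimpleGraph V) [G.LocallyFinite]

lemma pn_eq_transPow : pn G = transPow (step G) := by
  ext n u v
  induction n generalizing u with
  | zero => rfl
  | succ n ih => simp only [pn, transPow_succ, ih]

lemma degree_mul_step_comm (u w : V) :
    (G.degree u : ℝ≥0∞) * step G u w = G.degree w * step G w u := by
  by_cases h : G.Adj u w
  · have hu : (G.degree u : ℝ≥0∞) ≠ 0 := by
      exact_mod_cast ((G.degree_pos_iff_exists_adj u).2 ⟨w, h⟩).ne'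
    have hw : (G.degree w : ℝ≥0∞) ≠ 0 := by
      exact_mod_cast ((G.degree_pos_iff_exists_adj w).2 ⟨u, h.symm⟩).ne'
    simp [step, h, h.symm, ENNReal.mul_inv_cancel, hu, hw]
  · have h' : ¬G.Adj w u := fun h' => h h'.symm
    simp [step, h, h']

end RandomWalk

section MarkovChain

variable {S : Type*} [MeasurableSpace S]

lemma measurableSet_cylinder_shift [MeasurableSingletonClass S] (n m : ℕ) (ω₀ : ℕ → S) :
    MeasurableSet {ω : ℕ → S | ∀ i ≤ m, ω (n + i) = ω₀ i} := by
  simp only [Set.ofPred_forall]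
  exact .iInter fun i => .iInter fun _ => measurable_pi_apply _ (measurableSet_singleton _)

theorem measure_eq_of_cylinder_eq [Countable S] [MeasurableSingletonClass S]
    {μ ν : Measure (ℕ → S)} [IsFiniteMeasure μ]
    (h : ∀ m (ω₀ : ℕ → S), μ {ω | ∀ i ≤ m, ω i = ω₀ i} = ν {ω | ∀ i ≤ m, ω i = ω₀ i}) :
    μ = ν := by
  have hproj : IsProjectiveMeasureFamily fun I : Finset ℕ => μ.map I.restrict :=
    ProbabilityTheory.isProjectiveMeasureFamily_map_restrict (X := fun i (ω : ℕ → S) => ω i)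
      fun _ => (measurable_pi_apply _).aemeasurable
  refine IsProjectiveLimit.unique (fun _ => rfl) <|
    (isProjectiveLimit_nat_iff hproj ν).2 fun m => ?_
  refine Measure.ext_of_singleton fun f => ?_
  change ν.map (Preorder.frestrictLe m) {f} = μ.map (Preorder.frestrictLe m) {f}
  rw [Measure.map_apply (by fun_prop) (measurableSet_singleton f),
    Measure.map_apply (by fun_prop) (measurableSet_singleton f)]
  obtain hf | ⟨ω₀, hω₀⟩ :=
    (Preorder.frestrictLe (π := fun _ => S) m ⁻¹' {f}).eq_empty_or_nonempty
  · simp [hf]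
  · have hcyl : Preorder.frestrictLe (π := fun _ => S) m ⁻¹' {f} =
        {ω | ∀ i ≤ m, ω i = ω₀ i} := by
      ext ω
      simp only [Set.mem_preimage, Set.mem_singleton_iff] at hω₀ ⊢
      simp [← hω₀, funext_iff, Preorder.frestrictLe_apply]
    rw [hcyl, h]

def seqCons (w : S) (ω : ℕ → S) : ℕ → S
  | 0 => w
  | i + 1 => ω i

def shift (n : ℕ) (ω : ℕ → S) : ℕ → S := fun k => ω (n + k)

lemma measurable_shift (n : ℕ) : Measurable (shift n : (ℕ → S) → ℕ → S) :=
  measurable_pi_lambda _ fun k => measurable_pi_apply (n + k)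

def IsMarkovChainLaw (P : S → S → ℝ≥0∞) (x : S) (μ : Measure (ℕ → S)) : Prop :=
  IsProbabilityMeasure μ ∧
    ∀ (m : ℕ) (ω₀ : ℕ → S), μ {ω | ∀ i ≤ m, ω i = ω₀ i} =
      (if ω₀ 0 = x then 1 else 0) * ∏ i ∈ Finset.range m, P (ω₀ i) (ω₀ (i + 1))

namespace IsMarkovChainLaw

variable [Countable S] [MeasurableSingletonClass S] {P : S → S → ℝ≥0∞} {x y : S}
  {μ ν : Measure (ℕ → S)}

theorem measure_cylinder_shift (hμ : IsMarkovChainLaw P x μ) (n m : ℕ) (ω₀ : ℕ → S) :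
    μ {ω | ∀ i ≤ m, ω (n + i) = ω₀ i} =
      transPow P n x (ω₀ 0) * ∏ i ∈ Finset.range m, P (ω₀ i) (ω₀ (i + 1)) := by
  induction n generalizing m ω₀ with
  | zero => simpa [transPow_zero, eq_comm] using hμ.2 m ω₀
  | succ n ih =>
    have hunion : {ω : ℕ → S | ∀ i ≤ m, ω (n + 1 + i) = ω₀ i} =
        ⋃ w, {ω | ∀ i ≤ m + 1, ω (n + i) = seqCons w ω₀ i} := by
      ext ω
      simp only [Set.mem_ofPred_eq, Set.mem_iUnion]
      constructor
      · intro h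
        refine ⟨ω n, fun i hi => ?_⟩
        cases i with
        | zero => rfl
        | succ i => exact (congrArg ω (by omega)).trans (h i (by omega))
      · rintro ⟨w, h⟩ i hi
        exact (congrArg ω (by omega)).trans (h (i + 1) (by omega))
    have hdisj : Pairwise (Function.onFun Disjoint fun w : S =>
        {ω : ℕ → S | ∀ i ≤ m + 1, ω (n + i) = seqCons w ω₀ i}) := by
      refine fun w w' hne => Set.disjoint_left.2 fun ω hw hw' => hne ?_
      exact (hw 0 (Nat.zero_le _)).symm.trans (hw' 0 (Nat.zero_le _))
    rw [hunion, measure_iUnion hdisj fun w => measurableSet_cylinder_shift _ _ _, transPow_succ',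
      ← ENNReal.tsum_mul_right]
    refine tsum_congr fun w => ?_
    rw [ih, Finset.prod_range_succ', mul_assoc, mul_comm (∏ i ∈ _, _)]
    rfl

theorem measure_inter_preimage_shift (hμ : IsMarkovChainLaw P x μ) (hν : IsMarkovChainLaw P y ν)
    (n : ℕ) {E : Set (ℕ → S)} (hE : MeasurableSet E) :
    μ ({ω | ω n = y} ∩ shift n ⁻¹' E) = transPow P n x y * ν E := by
  have : IsProbabilityMeasure μ := hμ.1
  have hshift := measurable_shift (S := S) n
  have hlaw : (μ.restrict {ω | ω n = y}).map (shift n) = transPow P n x y • ν := by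
    refine measure_eq_of_cylinder_eq fun m ω₀ => ?_
    have hcyl := measurableSet_cylinder_shift 0 m ω₀
    simp only [zero_add] at hcyl
    rw [Measure.map_apply hshift hcyl, Measure.restrict_apply (hshift hcyl), Measure.smul_apply,
      smul_eq_mul, hν.2]
    by_cases h : ω₀ 0 = y
    · have hsub : shift n ⁻¹' {ω | ∀ i ≤ m, ω i = ω₀ i} ∩ {ω | ω n = y} =
          {ω | ∀ i ≤ m, ω (n + i) = ω₀ i} :=
        Set.inter_eq_left.2 fun ω hω => (hω 0 (Nat.zero_le _)).trans h
      rw [hsub, hμ.measure_cylinder_shift, h, if_pos rfl, one_mul]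
    · have hempty : shift n ⁻¹' {ω | ∀ i ≤ m, ω i = ω₀ i} ∩ {ω | ω n = y} = ∅ :=
        Set.eq_empty_of_forall_notMem fun ω ⟨hω, hy⟩ => h ((hω 0 (Nat.zero_le _)).symm.trans hy)
      rw [hempty, if_neg h]
      simp
  have hlawE := congrArg (· E) hlaw
  simp only [Measure.map_apply hshift hE, Measure.restrict_apply (hshift hE),
    Measure.smul_apply, smul_eq_mul] at hlawE
  rwa [Set.inter_comm]

end IsMarkovChainLaw

end MarkovChain

section CollidingWalks

lemma IsPairWalkMeasure.isMarkovChainLaw [MeasurableSpace V] {p : V → V → ℝ≥0∞} {a b : V}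
    {μ : Measure (ℕ → V × V)} (h : IsPairWalkMeasure p a b μ) :
    IsMarkovChainLaw (fun s t : V × V => p s.1 t.1 * p s.2 t.2) (a, b) μ := by
  have hiff : IsPairWalkMeasure p a b μ ↔
      IsMarkovChainLaw (fun s t : V × V => p s.1 t.1 * p s.2 t.2) (a, b) μ := by
    unfold IsPairWalkMeasure IsMarkovChainLaw
    -- not `Iff.rfl`: the two `if`s are elaborated with different `Decidable` instances
    congr!
  exact hiff.1 h

lemma measurableSet_noCollision [Countable V] [MeasurableSpace V] [DiscreteMeasurableSpace V] :
    MeasurableSet (noCollision : Set (ℕ → V × V)) := by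
  have hdiag : MeasurableSet {q : V × V | q.1 ≠ q.2} := .of_discrete
  simp only [noCollision, Set.ofPred_forall]
  exact .iInter fun n => .iInter fun _ => hdiag.preimage (measurable_pi_apply n)

def lastCollisionAtTime (v : V) (n : ℕ) : Set (ℕ → V × V) :=
  {ω | ω n = (v, v)} ∩ shift n ⁻¹' noCollision

lemma lastCollisionAt_eq_iUnion (v : V) : lastCollisionAt v = ⋃ n, lastCollisionAtTime v n := by
  ext ω
  simp only [lastCollisionAt, lastCollisionAtTime, noCollision, shift, Set.mem_iUnion,
    Set.mem_inter_iff, Set.mem_preimage, Set.mem_ofPred_eq]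
  refine exists_congr fun n => and_congr_right fun _ =>
    ⟨fun h k hk => h _ (by omega), fun h m hm => ?_⟩
  simpa [Nat.add_sub_cancel' hm.le] using h (m - n) (by omega)

lemma pairwise_disjoint_lastCollisionAtTime (v : V) :
    Pairwise (Function.onFun Disjoint (lastCollisionAtTime v)) := by
  suffices h : ∀ n n', n < n' → Disjoint (lastCollisionAtTime v n) (lastCollisionAtTime v n') by
    intro n n' hne
    rcases hne.lt_or_gt with hlt | hlt
    · exact h n n' hlt
    · exact (h n' n hlt).symm
  refine fun n n' hlt => Set.disjoint_left.2 fun ω ⟨_, hn⟩ ⟨hn', _⟩ => hn (n' - n) (by omega) ?_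
  simp [shift, Nat.add_sub_cancel' hlt.le, show ω n' = (v, v) from hn']

theorem measure_lastCollisionAt [Countable V] [MeasurableSpace V] [DiscreteMeasurableSpace V]
    (G : SimpleGraph V) [G.LocallyFinite] {u v : V} {μ ν : Measure (ℕ → V × V)}
    (hμ : IsPairWalkMeasure (step G) u u μ) (hν : IsPairWalkMeasure (step G) v v ν) :
    μ (lastCollisionAt v) = ∑' n, pn G n u v * pn G n u v * ν noCollision := by
  rw [lastCollisionAt_eq_iUnion, measure_iUnion (pairwise_disjoint_lastCollisionAtTime v)
    fun n => (measurable_pi_apply n (measurableSet_singleton _)).inter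
      (measurable_shift n measurableSet_noCollision)]
  refine tsum_congr fun n => ?_
  rw [lastCollisionAtTime, hμ.isMarkovChainLaw.measure_inter_preimage_shift
    hν.isMarkovChainLaw n measurableSet_noCollision, transPow_prodMk, pn_eq_transPow]

end CollidingWalks

theorem mass_transport_identity_general
    [Countable V] [MeasurableSpace V] [DiscreteMeasurableSpace V]
    (G : SimpleGraph V) [G.LocallyFinite]
    (μ : V → Measure (ℕ → V × V))
    (hμ : ∀ w : V, IsPairWalkMeasure (step G) w w (μ w))
    (v : V) :
    ∑' u : V, (G.degree u : ℝ≥0∞) * μ u (lastCollisionAt v)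
      = (G.degree v : ℝ≥0∞) * μ v noCollision * ∑' n : ℕ, pn G (2 * n) v v := by
  calc ∑' u : V, (G.degree u : ℝ≥0∞) * μ u (lastCollisionAt v)
      = ∑' n, (∑' u, (G.degree u : ℝ≥0∞) * (pn G n u v * pn G n u v)) * μ v noCollision := by
        simp_rw [measure_lastCollisionAt G (hμ _) (hμ v), ← ENNReal.tsum_mul_left,
          ← ENNReal.tsum_mul_right, mul_assoc]
        exact ENNReal.tsum_comm
    _ = ∑' n, (G.degree v : ℝ≥0∞) * pn G (n + n) v v * μ v noCollision := by
        simp_rw [pn_eq_transPow, tsum_mul_transPow_sq _ (degree_mul_step_comm G)]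
    _ = (G.degree v : ℝ≥0∞) * μ v noCollision * ∑' n : ℕ, pn G (2 * n) v v := by
        rw [← ENNReal.tsum_mul_left]
        exact tsum_congr fun n => by rw [two_mul, mul_right_comm]

/-- `Σ_u deg(u) · q_last(u, v) = deg(v) · q_0(v) · Σ_{n ≥ 0} p_{2n}(v, v)`
in the extended nonnegative reals. -/
theorem mass_transport_identity
    [Countable V] [MeasurableSpace V] [DiscreteMeasurableSpace V]
    (G : SimpleGraph V) [G.LocallyFinite]
    (hconn : G.Connected) (hdeg : ∀ v : V, 0 < G.degree v)
    (μ : V → Measure (ℕ → V × V))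
    (hμ : ∀ w : V, IsPairWalkMeasure (step G) w w (μ w))
    (v : V) :
    ∑' u : V, (G.degree u : ℝ≥0∞) * μ u (lastCollisionAt v)
      = (G.degree v : ℝ≥0∞) * μ v noCollision * ∑' n : ℕ, pn G (2 * n) v v :=
  mass_transport_identity_general G μ hμ v

end CollisionsStmt
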